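/- arXiv:1410.3207 — 2 statements merged into one kernel-verified Lean document; each statement's English description precedes it below -/
import Mathlib

section
/- Let hold: c({|X_t − y| ≤ ε}) ≤ exp(β/2)·ε^{2α}/t^α for all y, t > 0, ε > 0, and suppose |φ(x)| ≤ M·1_{{|x| ≤ N}} for a Borel function φ, where Ê[φ(X_t)] ≤ M·Ê[1_{{|X_t| ≤ N}}] and X_t has the same sublinear distribution as √t·X̄ for an ℝⁿ-valued random variable X̄ satisfying Ê[exp(−mβ|X̄|²/2)] ≤ (1+m)^{−α} for all m ≥ 0. Then Ê[|φ(X_t)|] → 0 as t → ∞. -/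
/-!
On `{|X̄| ≤ R}` the weight `exp(mβR²/2)·exp(−mβ|X̄|²/2)` is at least `1`, so monotonicity and
positive homogeneity give `Ê[1_{|X̄| ≤ N/√t}] ≤ exp(mβN²/(2t))·(1+m)^(−α)`. Letting `t → ∞` the
exponential factor tends to `1`, and then `(1+m)^(−α) → 0` as `m → ∞`.
-/

open Filter Topology

lemma indicator_norm_le_le_exp_mul_exp {Ω F : Type*} [SeminormedAddCommGroup F] (Y : Ω → F)
    {a : ℝ} (ha : 0 ≤ a) (R : ℝ) (ω : Ω) :
    {ω | ‖Y ω‖ ≤ R}.indicator (fun _ => (1 : ℝ)) ω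
      ≤ Real.exp (a * R ^ 2 / 2) * Real.exp (-(a * ‖Y ω‖ ^ 2) / 2) := by
  by_cases hY : ω ∈ {ω | ‖Y ω‖ ≤ R}
  · rw [Set.indicator_of_mem hY, ← Real.exp_add]
    have hsq : ‖Y ω‖ ^ 2 ≤ R ^ 2 := pow_le_pow_left₀ (norm_nonneg _) hY 2
    exact Real.one_le_exp (by nlinarith)
  · rw [Set.indicator_of_notMem hY]
    positivity

lemma tendsto_zero_of_le_of_tendsto_of_tendsto {ι κ : Type*} {l : Filter ι} {l' : Filter κ}
    [l'.NeBot] {f : ι → ℝ} {g : κ → ι → ℝ} {c : κ → ℝ} (hf : ∀ᶠ t in l, 0 ≤ f t)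
    (hfg : ∀ᶠ m in l', ∀ᶠ t in l, f t ≤ g m t) (hg : ∀ m, Tendsto (g m) l (𝓝 (c m)))
    (hc : Tendsto c l' (𝓝 0)) : Tendsto f l (𝓝 0) := by
  refine tendsto_order.2 ⟨fun a ha => hf.mono fun t ht => ha.trans_le ht, fun a ha => ?_⟩
  obtain ⟨m, hfgm, hcm⟩ := (hfg.and (hc.eventually (gt_mem_nhds ha))).exists
  exact (hfgm.and ((hg m).eventually (gt_mem_nhds hcm))).mono fun t ht => ht.1.trans_lt ht.2

section MonotoneHomogeneous

variable {Ω : Type*} {E : (Ω → ℝ) → ℝ}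
  (hE_mono : ∀ f g : Ω → ℝ, (∀ ω, f ω ≤ g ω) → E f ≤ E g)
  (hE_hom : ∀ (k : ℝ) (f : Ω → ℝ), 0 ≤ k → E (fun ω => k * f ω) = k * E f)
include hE_mono hE_hom

lemma nonneg_of_monotone_of_posHomogeneous {f : Ω → ℝ} (hf : ∀ ω, 0 ≤ f ω) : 0 ≤ E f := by
  have hE_zero : E (fun _ => 0 * 0) = 0 := by rw [hE_hom 0 (fun _ => 0) le_rfl, zero_mul]
  exact hE_zero ▸ hE_mono _ _ fun ω => (zero_mul (0 : ℝ)).trans_le (hf ω)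

lemma indicator_norm_le_le_of_gaussian_bound {F : Type*} [SeminormedAddCommGroup F]
    {Y : Ω → F} {a b : ℝ} (ha : 0 ≤ a) (hY : E (fun ω => Real.exp (-(a * ‖Y ω‖ ^ 2) / 2)) ≤ b)
    (R : ℝ) :
    E ({ω | ‖Y ω‖ ≤ R}.indicator (fun _ => (1 : ℝ))) ≤ Real.exp (a * R ^ 2 / 2) * b :=
  calc E ({ω | ‖Y ω‖ ≤ R}.indicator (fun _ => (1 : ℝ)))
      ≤ E (fun ω => Real.exp (a * R ^ 2 / 2) * Real.exp (-(a * ‖Y ω‖ ^ 2) / 2)) :=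
        hE_mono _ _ (indicator_norm_le_le_exp_mul_exp Y ha R)
    _ = Real.exp (a * R ^ 2 / 2) * E (fun ω => Real.exp (-(a * ‖Y ω‖ ^ 2) / 2)) :=
        hE_hom _ _ (Real.exp_pos _).le
    _ ≤ Real.exp (a * R ^ 2 / 2) * b := by gcongr

end MonotoneHomogeneous

theorem stmt7_general {Ω : Type*} (n : ℕ) (E : (Ω → ℝ) → ℝ)
    (α β M N : ℝ) (hα : 0 < α) (hβ : 0 < β) (hM : 0 < M)
    (X : ℝ → Ω → EuclideanSpace ℝ (Fin n)) (Xb : Ω → EuclideanSpace ℝ (Fin n))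
    (φ : EuclideanSpace ℝ (Fin n) → ℝ)
    (hE_mono : ∀ f g : Ω → ℝ, (∀ ω, f ω ≤ g ω) → E f ≤ E g)
    (hE_hom : ∀ (k : ℝ) (f : Ω → ℝ), 0 ≤ k → E (fun ω => k * f ω) = k * E f)
    -- `|φ(X_t)| ≤ M·1_{|X_t|≤N}` together with identical sublinear distribution
    -- of `X_t` and `√t·X̄`
    (hineq : ∀ t > (0 : ℝ), E (fun ω => |φ (X t ω)|)
        ≤ M * E ({ω | ‖Xb ω‖ ≤ N / Real.sqrt t}.indicator (fun _ => (1 : ℝ))))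
    (hXb : ∀ m : ℝ, 0 ≤ m →
      E (fun ω => Real.exp (-(m * β * ‖Xb ω‖ ^ 2) / 2)) ≤ (1 + m) ^ (-α)) :
    Filter.Tendsto (fun t => E (fun ω => |φ (X t ω)|)) Filter.atTop (nhds 0) := by
  set bound : ℝ → ℝ → ℝ := fun m t =>
    M * (Real.exp (m * β * (N / Real.sqrt t) ^ 2 / 2) * (1 + m) ^ (-α))
  have hbound : ∀ᶠ m in atTop, ∀ᶠ t in atTop, E (fun ω => |φ (X t ω)|) ≤ bound m t := by
    filter_upwards [eventually_ge_atTop 0] with m hm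
    filter_upwards [eventually_gt_atTop 0] with t ht
    exact (hineq t ht).trans <| mul_le_mul_of_nonneg_left
      (indicator_norm_le_le_of_gaussian_bound hE_mono hE_hom (by positivity) (hXb m hm) _) hM.le
  have hR : Tendsto (fun t => N / Real.sqrt t) atTop (𝓝 0) :=
    tendsto_const_nhds.div_atTop Real.tendsto_sqrt_atTop
  have hbound_lim : ∀ m, Tendsto (bound m) atTop (𝓝 (M * (1 + m) ^ (-α))) := fun m => by
    have hcont : Continuous fun R : ℝ => M * (Real.exp (m * β * R ^ 2 / 2) * (1 + m) ^ (-α)) := by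
      fun_prop
    simpa [bound, Function.comp_def] using (hcont.tendsto 0).comp hR
  have hlim : Tendsto (fun m : ℝ => M * (1 + m) ^ (-α)) atTop (𝓝 0) := by
    simpa using ((tendsto_rpow_neg_atTop hα).comp
      (tendsto_atTop_add_const_left _ 1 tendsto_id)).const_mul M
  exact tendsto_zero_of_le_of_tendsto_of_tendsto
    (Eventually.of_forall fun _ =>
      nonneg_of_monotone_of_posHomogeneous hE_mono hE_hom fun _ => abs_nonneg _)
    hbound hbound_lim hlim

/-- If `|φ| ≤ M·1_{|x|≤N}`, `X_t` scales like `√t·X̄`, and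
`Ê[exp(−mβ|X̄|²/2)] ≤ (1+m)^(−α)`, then `Ê[|φ(X_t)|] → 0` as `t → ∞`. -/
theorem stmt7 {Ω : Type*} (n : ℕ) (E : (Ω → ℝ) → ℝ)
    (α β M N : ℝ) (hα : 0 < α) (hβ : 0 < β) (hM : 0 < M) (hN : 0 < N)
    (X : ℝ → Ω → EuclideanSpace ℝ (Fin n)) (Xb : Ω → EuclideanSpace ℝ (Fin n))
    (φ : EuclideanSpace ℝ (Fin n) → ℝ)
    (hE_mono : ∀ f g : Ω → ℝ, (∀ ω, f ω ≤ g ω) → E f ≤ E g)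
    (hE_nonneg : ∀ f : Ω → ℝ, (∀ ω, 0 ≤ f ω) → 0 ≤ E f)
    (hE_hom : ∀ (k : ℝ) (f : Ω → ℝ), 0 ≤ k → E (fun ω => k * f ω) = k * E f)
    -- `|φ(X_t)| ≤ M·1_{|X_t|≤N}` together with identical sublinear distribution
    -- of `X_t` and `√t·X̄`
    (hineq : ∀ t > (0 : ℝ), E (fun ω => |φ (X t ω)|)
        ≤ M * E ({ω | ‖Xb ω‖ ≤ N / Real.sqrt t}.indicator (fun _ => (1 : ℝ))))
    (hXb : ∀ m : ℝ, 0 ≤ m →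
      E (fun ω => Real.exp (-(m * β * ‖Xb ω‖ ^ 2) / 2)) ≤ (1 + m) ^ (-α)) :
    Filter.Tendsto (fun t => E (fun ω => |φ (X t ω)|)) Filter.atTop (nhds 0) :=
  stmt7_general n E α β M N hα hβ hM X Xb φ hE_mono hE_hom hineq hXb
end

section
/- Let c be a capacity represented by a weakly compact family 𝒫 of probability measures (so c(F_k) ↓ c(F) for closed sets F_k ↓ F). Let ξ : Ω → ℝᵏ be quasi-continuous and A ∈ B(ℝᵏ) with c({ξ ∈ ∂A}) = 0. Then the indicator 1_{{ξ ∈ A}} is quasi-continuous, i.e., for every ε > 0 there is an open set O ⊆ Ω with c(O) < ε such that 1_{{ξ ∈ A}} restricted to O^c is continuous. -/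
open Set Metric Filter Topology

/-!
Off a small open set `O₁` the map `ξ` is continuous, so there `1_{ξ ∈ A}` can only jump where `ξ`
hits `∂A`. The closed sets `O₁ᶜ ∩ {ξ ∈ cthickening (1/(i+1)) ∂A}` decrease to `O₁ᶜ ∩ {ξ ∈ ∂A}`, of
capacity zero, so one of them has small capacity. Removing also the relatively open set
`O₁ᶜ ∩ {ξ ∈ thickening δ ∂A}` inside it leaves a closed set on which `ξ` is continuous and avoids
`∂A`, where the indicator is therefore continuous.
-/

def QuasiContinuous {Ω X : Type*} [TopologicalSpace Ω] [TopologicalSpace X]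
    (c : Set Ω → ℝ) (f : Ω → X) : Prop :=
  ∀ ε > (0 : ℝ), ∃ O : Set Ω, IsOpen O ∧ c O < ε ∧ ContinuousOn f Oᶜ

theorem quasiContinuous_iff_continuous_domRestrict {Ω X : Type*} [TopologicalSpace Ω]
    [TopologicalSpace X] {c : Set Ω → ℝ} {f : Ω → X} :
    QuasiContinuous c f ↔
      ∀ ε > (0 : ℝ), ∃ O : Set Ω, IsOpen O ∧ c O < ε ∧ Continuous (Oᶜ.domRestrict f) := by
  simp only [QuasiContinuous, continuousOn_iff_continuous_domRestrict]

theorem ContinuousOn.indicator_preimage {X E M : Type*} [TopologicalSpace X]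
    [TopologicalSpace E] [TopologicalSpace M] [Zero M] {s : Set X} {f : X → E}
    (hf : ContinuousOn f s) {A : Set E} (hA : MapsTo f s (frontier A)ᶜ) (m : M) :
    ContinuousOn ({x | f x ∈ A}.indicator fun _ => m) s := by
  rw [continuousOn_iff_continuous_domRestrict] at hf ⊢
  change Continuous ((s.domRestrict f ⁻¹' A).indicator fun _ => m)
  exact continuous_indicator
    (fun x hx => (hA x.2 (hf.frontier_preimage_subset A hx)).elim) continuousOn_const

section Capacity

variable {Ω E : Type*} [TopologicalSpace Ω] [PseudoEMetricSpace E] {c : Set Ω → ℝ}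

theorem exists_capacity_inter_preimage_cthickening_lt
    (hc_mono : ∀ A B : Set Ω, A ⊆ B → c A ≤ c B)
    (hc_closed : ∀ F : ℕ → Set Ω, (∀ i, IsClosed (F i)) → Antitone F →
      Tendsto (fun i => c (F i)) atTop (𝓝 (c (⋂ i, F i))))
    {K : Set Ω} (hK : IsClosed K) {ξ : Ω → E} (hξ : ContinuousOn ξ K)
    {C : Set E} (hC : IsClosed C) {ε : ℝ} (hε : c (K ∩ ξ ⁻¹' C) < ε) :
    ∃ δ > 0, c (K ∩ ξ ⁻¹' cthickening δ C) < ε := by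
  set F : ℕ → Set Ω := fun i => K ∩ ξ ⁻¹' cthickening (1 / (i + 1 : ℝ)) C
  have hF_closed : ∀ i, IsClosed (F i) := fun i =>
    hξ.preimage_isClosed_of_isClosed hK isClosed_cthickening
  have hF_anti : Antitone F := fun i j hij =>
    inter_subset_inter_right _ (preimage_mono (cthickening_mono (Nat.one_div_le_one_div hij) _))
  have hF_inter : ⋂ i, F i ⊆ K ∩ ξ ⁻¹' C := by
    intro x hx
    have hxF : ∀ i, x ∈ F i := mem_iInter.1 hx
    refine ⟨(hxF 0).1, ?_⟩
    rw [mem_preimage, ← hC.closure_eq, closure_eq_iInter_cthickening]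
    refine mem_iInter₂.2 fun δ hδ => ?_
    obtain ⟨i, hi⟩ := exists_nat_one_div_lt hδ
    exact cthickening_mono hi.le C (hxF i).2
  obtain ⟨i, hi⟩ := ((hc_closed F hF_closed hF_anti).eventually
    (gt_mem_nhds ((hc_mono _ _ hF_inter).trans_lt hε))).exists
  exact ⟨_, Nat.one_div_pos_of_nat, hi⟩

theorem QuasiContinuous.exists_isOpen_mapsTo_compl
    (hc_mono : ∀ A B : Set Ω, A ⊆ B → c A ≤ c B)
    (hc_subadd : ∀ A B : Set Ω, c (A ∪ B) ≤ c A + c B)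
    (hc_closed : ∀ F : ℕ → Set Ω, (∀ i, IsClosed (F i)) → Antitone F →
      Tendsto (fun i => c (F i)) atTop (𝓝 (c (⋂ i, F i))))
    {ξ : Ω → E} (hξ : QuasiContinuous c ξ) {C : Set E} (hC : IsClosed C)
    (hCξ : c (ξ ⁻¹' C) = 0) {ε : ℝ} (hε : 0 < ε) :
    ∃ O : Set Ω, IsOpen O ∧ c O < ε ∧ ContinuousOn ξ Oᶜ ∧ MapsTo ξ Oᶜ Cᶜ := by
  obtain ⟨O₁, hO₁, hcO₁, hξK⟩ := hξ (ε / 2) (half_pos hε)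
  obtain ⟨δ, hδ, hcδ⟩ := exists_capacity_inter_preimage_cthickening_lt hc_mono hc_closed
    hO₁.isClosed_compl hξK hC
    ((hc_mono _ _ inter_subset_right).trans_lt (hCξ ▸ half_pos hε))
  obtain ⟨V, hV, hVeq⟩ := _root_.continuousOn_iff'.1 hξK (thickening δ C) isOpen_thickening
  have hV_sub : V ∩ O₁ᶜ ⊆ O₁ᶜ ∩ ξ ⁻¹' cthickening δ C := by
    rw [← hVeq, inter_comm]
    exact inter_subset_inter_right _ (preimage_mono (thickening_subset_cthickening δ C))
  refine ⟨O₁ ∪ V, hO₁.union hV, ?_, ?_, ?_⟩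
  · have h_sub : O₁ ∪ V ⊆ O₁ ∪ (O₁ᶜ ∩ ξ ⁻¹' cthickening δ C) := by
      rintro x (hx | hx)
      · exact Or.inl hx
      · by_cases hx₁ : x ∈ O₁
        · exact Or.inl hx₁
        · exact Or.inr (hV_sub ⟨hx, hx₁⟩)
    calc c (O₁ ∪ V) ≤ c (O₁ ∪ (O₁ᶜ ∩ ξ ⁻¹' cthickening δ C)) := hc_mono _ _ h_sub
      _ ≤ c O₁ + c (O₁ᶜ ∩ ξ ⁻¹' cthickening δ C) := hc_subadd _ _
      _ < ε := by linarith
  · exact hξK.mono (compl_subset_compl.2 subset_union_left)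
  · rintro x hx hxC
    rw [compl_union] at hx
    have hx' : x ∈ ξ ⁻¹' thickening δ C ∩ O₁ᶜ := ⟨self_subset_thickening hδ C hxC, hx.1⟩
    rw [hVeq] at hx'
    exact hx.2 hx'.1

theorem QuasiContinuous.indicator_preimage {M : Type*} [TopologicalSpace M] [Zero M]
    (hc_mono : ∀ A B : Set Ω, A ⊆ B → c A ≤ c B)
    (hc_subadd : ∀ A B : Set Ω, c (A ∪ B) ≤ c A + c B)
    (hc_closed : ∀ F : ℕ → Set Ω, (∀ i, IsClosed (F i)) → Antitone F →
      Tendsto (fun i => c (F i)) atTop (𝓝 (c (⋂ i, F i))))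
    {ξ : Ω → E} (hξ : QuasiContinuous c ξ) {A : Set E}
    (hA : c (ξ ⁻¹' frontier A) = 0) (m : M) :
    QuasiContinuous c ({x | ξ x ∈ A}.indicator fun _ => m) := by
  intro ε hε
  obtain ⟨O, hO, hcO, hξO, hO_frontier⟩ :=
    hξ.exists_isOpen_mapsTo_compl hc_mono hc_subadd hc_closed isClosed_frontier hA hε
  exact ⟨O, hO, hcO, hξO.indicator_preimage hO_frontier m⟩

end Capacity

theorem stmt8_general {Ω : Type*} [TopologicalSpace Ω] (k : ℕ)
    (c : Set Ω → ℝ)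
    (hc_mono : ∀ A B : Set Ω, A ⊆ B → c A ≤ c B)
    (hc_subadd : ∀ A B : Set Ω, c (A ∪ B) ≤ c A + c B)
    -- continuity along decreasing sequences of closed sets (weak compactness of 𝒫)
    (hc_closed : ∀ F : ℕ → Set Ω, (∀ i, IsClosed (F i)) → Antitone F →
      Filter.Tendsto (fun i => c (F i)) Filter.atTop (nhds (c (⋂ i, F i))))
    (ξ : Ω → EuclideanSpace ℝ (Fin k))
    -- quasi-continuity of ξ
    (hξ : ∀ ε > (0 : ℝ), ∃ O : Set Ω, IsOpen O ∧ c O < ε ∧ Continuous (Oᶜ.restrict ξ))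
    (A : Set (EuclideanSpace ℝ (Fin k)))
    (hbd : c {ω | ξ ω ∈ frontier A} = 0) :
    ∀ ε > (0 : ℝ), ∃ O : Set Ω, IsOpen O ∧ c O < ε ∧
      Continuous (Oᶜ.restrict ({ω | ξ ω ∈ A}.indicator (fun _ => (1 : ℝ)))) :=
  quasiContinuous_iff_continuous_domRestrict.1 <|
    (quasiContinuous_iff_continuous_domRestrict.2 hξ).indicator_preimage hc_mono hc_subadd
      hc_closed hbd 1

/-- If `ξ` is quasi-continuous and `c({ξ ∈ ∂A}) = 0`, then the indicator
`1_{{ξ ∈ A}}` is quasi-continuous. -/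
theorem stmt8 {Ω : Type*} [TopologicalSpace Ω] [PolishSpace Ω] (k : ℕ)
    (c : Set Ω → ℝ)
    (hc_nonneg : ∀ A : Set Ω, 0 ≤ c A)
    (hc_mono : ∀ A B : Set Ω, A ⊆ B → c A ≤ c B)
    (hc_subadd : ∀ A B : Set Ω, c (A ∪ B) ≤ c A + c B)
    -- continuity along decreasing sequences of closed sets (weak compactness of 𝒫)
    (hc_closed : ∀ F : ℕ → Set Ω, (∀ i, IsClosed (F i)) → Antitone F →
      Filter.Tendsto (fun i => c (F i)) Filter.atTop (nhds (c (⋂ i, F i))))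
    (ξ : Ω → EuclideanSpace ℝ (Fin k))
    -- quasi-continuity of ξ
    (hξ : ∀ ε > (0 : ℝ), ∃ O : Set Ω, IsOpen O ∧ c O < ε ∧ Continuous (Oᶜ.restrict ξ))
    (A : Set (EuclideanSpace ℝ (Fin k))) (hA : MeasurableSet A)
    (hbd : c {ω | ξ ω ∈ frontier A} = 0) :
    ∀ ε > (0 : ℝ), ∃ O : Set Ω, IsOpen O ∧ c O < ε ∧
      Continuous (Oᶜ.restrict ({ω | ξ ω ∈ A}.indicator (fun _ => (1 : ℝ)))) :=
  stmt8_general k c hc_mono hc_subadd hc_closed ξ hξ A hbd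
end
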